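/- arXiv:2206.05525 — 3 statements merged into one kernel-verified Lean document; each statement's English description precedes it below -/
import Mathlib

section
/- Let K be a field and let k, m be integers with k > m ≥ k/2 > 0 (equivalently 1 ≤ m < k ≤ 2m). Let φ, ψ be systems of formal power series with φ₀ = ψ₀ = 0, linear parts φ₁ = ψ₁ = id, and φ_i = ψ_i = 0 for all 2 ≤ i ≤ m. Then the compositions commute modulo degree k: (φ∘ψ)_{≤k} = (ψ∘φ)_{≤k}. (In other words, the subgroup G_{k,m} of the truncated transformation group G_k(n,K) is commutative.) -/
noncomputable section

open MvPowerSeries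

/-- A system of `n` formal power series in the `n` variables `x₁, …, xₙ` over `K`. -/
abbrev Sys (n : ℕ) (K : Type) [Field K] := Fin n → MvPowerSeries (Fin n) K

variable {n : ℕ} {K : Type} [Field K]

/-- The degree-`k` homogeneous component `φ_k` of a system `φ`. -/
def homC (k : ℕ) (φ : Sys n K) : Sys n K :=
  fun i => (fun e => if (e.sum fun _ x => x) = k then MvPowerSeries.coeff (R := K) e (φ i) else 0 :
    MvPowerSeries (Fin n) K)

/-- The truncation `φ_{≤ m}` of a system `φ` to total degrees `≤ m`. -/
def truncLE (m : ℕ) (φ : Sys n K) : Sys n K :=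
  fun i => (fun e => if (e.sum fun _ x => x) ≤ m then MvPowerSeries.coeff (R := K) e (φ i) else 0 :
    MvPowerSeries (Fin n) K)

/-- Composition (substitution) `φ ∘ ψ` of systems of formal power series.  The coefficient of a
monomial `e` in `φ ∘ ψ` is computed by substituting `ψ` into a sufficiently large polynomial
truncation of `φ`; this agrees with the usual substitution whenever `ψ` has zero constant term. -/
def comp (φ ψ : Sys n K) : Sys n K :=
  fun i => (fun e =>
    MvPowerSeries.coeff (R := K) e
      (MvPolynomial.eval₂ (MvPowerSeries.C (σ := Fin n) (R := K)) ψ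
        (MvPowerSeries.trunc K
          (Finsupp.equivFunOnFinite.symm fun _ => (e.sum fun _ x => x) + 1) (φ i))) :
    MvPowerSeries (Fin n) K)

/-- The identity system `id = (x₁, …, xₙ)`. -/
def idSys : Sys n K := fun i => MvPowerSeries.X i

/-- The `m`-fold composition `φ^m` of a system with itself (`φ^0 = id`). -/
def iterComp (φ : Sys n K) : ℕ → Sys n K
  | 0 => idSys
  | m + 1 => comp (iterComp φ m) φ

/-- The Jacobian matrix of a system, i.e. its linear part viewed as a matrix. -/
def jac (φ : Sys n K) : Matrix (Fin n) (Fin n) K :=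
  fun i j => MvPowerSeries.coeff (R := K) (Finsupp.single j 1) (φ i)

/-- The linear system of power series attached to a matrix `A`. -/
def ofMatrix (A : Matrix (Fin n) (Fin n) K) : Sys n K :=
  fun i => ∑ j, MvPowerSeries.C (σ := Fin n) (R := K) (A i j) * MvPowerSeries.X j

/-! Writing `φ = id + φ'` with `φ'` of order `> m`, one has
`φ ∘ ψ = ψ + φ' ∘ ψ`, and `φ' ∘ ψ ≡ φ'` modulo degree `2m + 1`: a monomial of degree `d > m`
evaluated at `ψ = id + ψ'` differs from itself only in degrees `≥ d + m`. Hence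
`φ ∘ ψ ≡ φ + ψ - id` modulo degree `2m + 1`, which is symmetric in `φ` and `ψ`. -/

namespace MvPowerSeries

variable {σ R : Type*} [CommRing R]

theorem le_order_prod_sub_prod {ι : Type*} (s : Finset ι) {a b : ι → MvPowerSeries σ R}
    {w : ι → ℕ∞} {q : ℕ∞} (ha : ∀ i ∈ s, w i ≤ (a i).order) (hb : ∀ i ∈ s, w i ≤ (b i).order)
    (hab : ∀ i ∈ s, w i + q ≤ (a i - b i).order) :
    (∑ i ∈ s, w i) + q ≤ (∏ i ∈ s, a i - ∏ i ∈ s, b i).order := by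
  classical
  induction s using Finset.induction_on with
  | empty => simp
  | insert x s hx ih =>
    simp only [Finset.forall_mem_insert] at ha hb hab
    rw [Finset.prod_insert hx, Finset.prod_insert hx, Finset.sum_insert hx,
      show a x * ∏ i ∈ s, a i - b x * ∏ i ∈ s, b i
        = a x * (∏ i ∈ s, a i - ∏ i ∈ s, b i) + (a x - b x) * ∏ i ∈ s, b i by ring]
    refine le_trans (le_min ?_ ?_) min_order_le_add
    · calc w x + ∑ i ∈ s, w i + q
          ≤ (a x).order + (∏ i ∈ s, a i - ∏ i ∈ s, b i).order := by
            rw [add_assoc]; exact add_le_add ha.1 (ih ha.2 hb.2 hab.2)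
        _ ≤ _ := le_order_mul
    · calc w x + ∑ i ∈ s, w i + q = (w x + q) + ∑ i ∈ s, w i := by ring
        _ ≤ (a x - b x).order + ∑ i ∈ s, (b i).order :=
            add_le_add hab.1 (Finset.sum_le_sum hb.2)
        _ ≤ (a x - b x).order + (∏ i ∈ s, b i).order := add_le_add le_rfl (le_order_prod _ _)
        _ ≤ _ := le_order_mul

theorem le_order_pow_sub_pow {a b : MvPowerSeries σ R} {q : ℕ∞}
    (ha : constantCoeff a = 0) (hb : constantCoeff b = 0) (hab : 1 + q ≤ (a - b).order)
    (t : ℕ) : t + q ≤ (a ^ t - b ^ t).order := by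
  simpa using le_order_prod_sub_prod (Finset.range t) (w := fun _ => 1)
    (fun _ _ => one_le_order_iff_constCoeff_eq_zero.mpr ha)
    (fun _ _ => one_le_order_iff_constCoeff_eq_zero.mpr hb) (fun _ _ => hab)

theorem le_order_eval₂_sub_eval₂ {τ : Type*} (p : MvPolynomial τ R)
    {f g : τ → MvPowerSeries σ R} {r : ℕ} {q : ℕ∞} (hp : ∀ d ∈ p.support, r ≤ d.degree)
    (hf : ∀ j, constantCoeff (f j) = 0) (hg : ∀ j, constantCoeff (g j) = 0)
    (hfg : ∀ j, 1 + q ≤ (f j - g j).order) :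
    r + q ≤ (p.eval₂ C f - p.eval₂ C g).order := by
  refine le_order fun e he => ?_
  rw [MvPolynomial.eval₂_eq, MvPolynomial.eval₂_eq, ← Finset.sum_sub_distrib, map_sum]
  refine Finset.sum_eq_zero fun d hd => ?_
  rw [← mul_sub, coeff_C_mul, coeff_of_lt_order, mul_zero]
  calc (e.degree : ℕ∞) < r + q := he
    _ ≤ d.degree + q := by gcongr; exact_mod_cast hp d hd
    _ ≤ _ := by
      rw [Finsupp.degree_apply, Nat.cast_sum]
      exact le_order_prod_sub_prod _
        (fun j _ => le_order_pow_of_constantCoeff_eq_zero _ (hf j))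
        (fun j _ => le_order_pow_of_constantCoeff_eq_zero _ (hg j))
        (fun j _ => le_order_pow_sub_pow (hf j) (hg j) (hfg j) _)

theorem eval₂_C_X_eq_coe (p : MvPolynomial σ R) :
    p.eval₂ C X = (p : MvPowerSeries σ R) := by
  conv_rhs => rw [← MvPolynomial.eval₂_eta p, ← MvPolynomial.coeToMvPowerSeries.ringHom_apply,
    MvPolynomial.hom_eval₂]
  congr 1
  · ext a
    simp [MvPolynomial.coeToMvPowerSeries.ringHom_apply]
  · funext j
    exact (MvPolynomial.coe_X j).symm

theorem trunc_X [DecidableEq σ] (N : σ →₀ ℕ) (i : σ) :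
    trunc R N (X i) = if Finsupp.single i 1 < N then MvPolynomial.X i else 0 := by
  ext d
  rw [coeff_trunc, coeff_X]
  by_cases hd : d = Finsupp.single i 1
  · subst hd
    split_ifs <;> simp_all [MvPolynomial.coeff_X]
  · split_ifs <;> simp [MvPolynomial.coeff_X, Ne.symm hd]

theorem coeff_eval₂_trunc_X [DecidableEq σ] {ψ : σ → MvPowerSeries σ R} {N e : σ →₀ ℕ} {i : σ}
    (hψ : constantCoeff (ψ i) = 0) (hN : e ≠ 0 → Finsupp.single i 1 < N) :
    coeff e ((trunc R N (X i)).eval₂ C ψ) = coeff e (ψ i) := by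
  rw [trunc_X]
  split_ifs with hiN
  · rw [MvPolynomial.eval₂_X]
  · obtain rfl : e = 0 := by_contra fun he => hiN (hN he)
    rw [MvPolynomial.eval₂_zero, map_zero, coeff_zero_eq_constantCoeff_apply, hψ]

theorem constantCoeff_eq_zero_of_le_order_sub_X {f : MvPowerSeries σ R} {j : σ} {m : ℕ}
    (h : ((m + 1 : ℕ) : ℕ∞) ≤ (f - X j).order) : constantCoeff f = 0 := by
  simpa using one_le_order_iff_constCoeff_eq_zero.mp ((by simp : (1 : ℕ∞) ≤ _).trans h)

theorem coeff_eval₂_trunc_of_le_order [DecidableEq σ] {ψ : σ → MvPowerSeries σ R}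
    {f : MvPowerSeries σ R} {m : ℕ} {N e : σ →₀ ℕ} (hf : ((m + 1 : ℕ) : ℕ∞) ≤ f.order)
    (hψ : ∀ j, ((m + 1 : ℕ) : ℕ∞) ≤ (ψ j - X j).order) (he : e.degree ≤ 2 * m) (heN : e < N) :
    coeff e ((trunc R N f).eval₂ C ψ) = coeff e f := by
  have hsupp : ∀ d ∈ (trunc R N f).support, m + 1 ≤ d.degree := by
    intro d hd
    have hd' : coeff d f ≠ 0 := fun h => by
      rw [MvPolynomial.mem_support_iff, coeff_trunc, h, ite_self] at hd
      exact hd rfl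
    exact_mod_cast hf.trans (order_le hd')
  have hord := le_order_eval₂_sub_eval₂ _ hsupp (q := m)
    (fun j => constantCoeff_eq_zero_of_le_order_sub_X (hψ j))
    constantCoeff_X (fun j => by rw [add_comm]; exact_mod_cast hψ j)
  have h0 := coeff_of_lt_order (d := e) (lt_of_lt_of_le (by norm_cast; omega) hord)
  rwa [map_sub, sub_eq_zero, eval₂_C_X_eq_coe, MvPolynomial.coeff_coe, coeff_trunc,
    if_pos heN] at h0

end MvPowerSeries

section Systems

variable {m : ℕ} {φ ψ : Sys n K}

theorem sum_id_eq_degree (e : Fin n →₀ ℕ) : (e.sum fun _ x => x) = e.degree := rfl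

theorem idSys_apply (i : Fin n) : (idSys : Sys n K) i = X i := rfl

theorem coeff_homC (t : ℕ) (φ : Sys n K) (i : Fin n) (e : Fin n →₀ ℕ) :
    coeff e (homC t φ i) = if e.degree = t then coeff e (φ i) else 0 := rfl

theorem coeff_truncLE (k : ℕ) (φ : Sys n K) (i : Fin n) (e : Fin n →₀ ℕ) :
    coeff e (truncLE k φ i) = if e.degree ≤ k then coeff e (φ i) else 0 := rfl

def degBound (e : Fin n →₀ ℕ) : Fin n →₀ ℕ :=
  Finsupp.equivFunOnFinite.symm fun _ => e.degree + 1

theorem degBound_apply (e : Fin n →₀ ℕ) (j : Fin n) : degBound e j = e.degree + 1 := rfl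

theorem lt_degBound [Nonempty (Fin n)] (e : Fin n →₀ ℕ) : e < degBound e :=
  Finsupp.lt_def.mpr ⟨fun j => (Finsupp.le_degree j e).trans (by simp [degBound_apply]),
    Classical.arbitrary _, by simp [degBound_apply, Finsupp.le_degree]⟩

theorem single_lt_degBound (i : Fin n) {e : Fin n →₀ ℕ} (he : e ≠ 0) :
    Finsupp.single i 1 < degBound e := by
  have hdeg : e.degree ≠ 0 := fun h => he ((Finsupp.degree_eq_zero_iff e).mp h)
  refine Finsupp.lt_def.mpr ⟨fun j => ?_, i, by simp [degBound_apply]; omega⟩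
  rw [degBound_apply, Finsupp.single_apply]
  split_ifs <;> omega

theorem coeff_comp (φ ψ : Sys n K) (i : Fin n) (e : Fin n →₀ ℕ) :
    coeff e (comp φ ψ i) = coeff e ((trunc K (degBound e) (φ i)).eval₂ C ψ) := by
  rw [coeff_apply, comp, sum_id_eq_degree, degBound]

theorem homC_idSys (t : ℕ) : homC t (idSys : Sys n K) = if t = 1 then idSys else 0 := by
  classical
  funext i
  ext e
  rw [coeff_homC]
  split_ifs with he ht ht <;> simp_all [idSys_apply, coeff_X]
  all_goals rintro rfl; simp_all

/-- `φ_{≤ m} = id_{≤ m}`, phrased through the order of `φ - id`. -/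
def IsIdUpToDeg (m : ℕ) (φ : Sys n K) : Prop :=
  ∀ i, ((m + 1 : ℕ) : ℕ∞) ≤ (φ i - idSys i).order

theorem isIdUpToDeg_of_homC_eq (h : ∀ t ≤ m, homC t φ = homC t idSys) : IsIdUpToDeg m φ :=
  fun i => nat_le_order fun e he => by
    have := congrArg (coeff e) (congrFun (h e.degree (by omega)) i)
    rwa [coeff_homC, coeff_homC, if_pos rfl, if_pos rfl, ← sub_eq_zero, ← map_sub] at this

theorem isIdUpToDeg_max_one (h0 : homC 0 φ = 0) (h1 : homC 1 φ = idSys)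
    (h : ∀ t, 2 ≤ t → t ≤ m → homC t φ = 0) : IsIdUpToDeg (max m 1) φ :=
  isIdUpToDeg_of_homC_eq fun t ht => by
    rw [homC_idSys]
    rcases t with _ | _ | t
    · simpa using h0
    · simpa using h1
    · simpa using h (t + 2) (by omega) (by omega)

theorem coeff_comp_of_isIdUpToDeg (hφ : IsIdUpToDeg m φ) (hψ : IsIdUpToDeg m ψ) (i : Fin n)
    {e : Fin n →₀ ℕ} (he : e.degree ≤ 2 * m) :
    coeff e (comp φ ψ i) = coeff e (φ i + ψ i - idSys i) := by
  have : Nonempty (Fin n) := ⟨i⟩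
  have hsplit : trunc K (degBound e) (φ i)
      = trunc K (degBound e) (X i) + trunc K (degBound e) (φ i - X i) := by
    rw [← map_add, add_sub_cancel]
  rw [coeff_comp, hsplit, MvPolynomial.eval₂_add, map_add,
    coeff_eval₂_trunc_X (constantCoeff_eq_zero_of_le_order_sub_X (hψ i)) (single_lt_degBound i),
    coeff_eval₂_trunc_of_le_order (f := φ i - X i) (hφ i) hψ he (lt_degBound e)]
  simp only [idSys_apply, map_sub, map_add]
  ring

end Systems

theorem subgroup_Gkm_commutative_general
    (n : ℕ) (K : Type) [Field K] (k m : ℕ)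
    (h3 : k ≤ 2 * m)
    (φ ψ : Sys n K)
    (hφ0 : homC 0 φ = 0) (hψ0 : homC 0 ψ = 0)
    (hφ1 : homC 1 φ = idSys) (hψ1 : homC 1 ψ = idSys)
    (hφ : ∀ i : ℕ, 2 ≤ i → i ≤ m → homC i φ = 0)
    (hψ : ∀ i : ℕ, 2 ≤ i → i ≤ m → homC i ψ = 0) :
    truncLE k (comp φ ψ) = truncLE k (comp ψ φ) := by
  have hφm := isIdUpToDeg_max_one hφ0 hφ1 hφ
  have hψm := isIdUpToDeg_max_one hψ0 hψ1 hψ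
  funext i
  ext e
  rw [coeff_truncLE, coeff_truncLE]
  split_ifs with he
  · have he' : e.degree ≤ 2 * max m 1 := by omega
    rw [coeff_comp_of_isIdUpToDeg hφm hψm i he', coeff_comp_of_isIdUpToDeg hψm hφm i he',
      add_comm (φ i)]
  · rfl

/-- Let `1 ≤ m < k ≤ 2m`.  If `φ, ψ` have zero constant term, linear part
the identity and vanishing homogeneous components in all degrees `2 ≤ i ≤ m`, then
`(φ∘ψ)_{≤k} = (ψ∘φ)_{≤k}`; i.e. the subgroup `G_{k,m}` of `G_k(n,K)` is commutative. -/
theorem subgroup_Gkm_commutative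
    (n : ℕ) (K : Type) [Field K] (k m : ℕ)
    (h1 : 1 ≤ m) (h2 : m < k) (h3 : k ≤ 2 * m)
    (φ ψ : Sys n K)
    (hφ0 : homC 0 φ = 0) (hψ0 : homC 0 ψ = 0)
    (hφ1 : homC 1 φ = idSys) (hψ1 : homC 1 ψ = idSys)
    (hφ : ∀ i : ℕ, 2 ≤ i → i ≤ m → homC i φ = 0)
    (hψ : ∀ i : ℕ, 2 ≤ i → i ≤ m → homC i ψ = 0) :
    truncLE k (comp φ ψ) = truncLE k (comp ψ φ) :=
  subgroup_Gkm_commutative_general n K k m h3 φ ψ hφ0 hψ0 hφ1 hψ1 hφ hψ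
end
end

section
/- Let K be a field, let p ≥ 2 be an integer not divisible by the characteristic of K, let ω ∈ K be a primitive p-th root of unity, and let k ≥ 1. Let φ = ω·id + Σ_{i=2}^{pk} φ_i be a system of formal power series whose homogeneous components vanish in degrees 0 and > pk and whose linear part is ω·id, and suppose (φ^p)_{≤pk} = id (φ is p-periodic modulo degree pk). Define u = −(ω/p)·(φ^p)_{pk+1} (a system homogeneous of degree pk+1) and set ψ = φ + u. Then the degree-r homogeneous component (ψ^p)_r is zero for every r with pk+2 ≤ r ≤ pk+p. -/
noncomputable section

open MvPowerSeries

variable {n : ℕ} {K : Type} [Field K]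

/-!
Write `Ψ = ψ^p`. Everything rests on one estimate: if two systems without constant terms agree
below degree `s`, then so do their monomials `a^d` and `b^d` below degree `s + |d| - 1`. Hence a
change of `φ` in degree `pk + 1` changes `φ^m` in degree `pk + 1` only to first order, by
`m ω^(m-1) u`; for `m = p` this is `-ω^p (φ^p)_{pk+1} = -(φ^p)_{pk+1}`, so `Ψ ≡ id` below degree
`pk + 2`. Next, if `Ψ ≡ id` below degree `r ≥ 2`, the degree-`r` parts of `ψ ∘ Ψ = Ψ ∘ ψ` read
`ψ_r + ω^r Ψ_r = ψ_r + ω Ψ_r`; for `pk + 2 ≤ r ≤ pk + p` we have `ω^(r-1) ≠ 1`, so `Ψ_r = 0`,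
and induction on `r` concludes.
-/

open Finsupp

theorem IsPrimitiveRoot.pow_mul_add_ne_self {R : Type*} [CommRing R] [IsDomain R] {ζ : R}
    {p : ℕ} (hζ : IsPrimitiveRoot ζ p) (k : ℕ) {t : ℕ} (ht : 2 ≤ t) (htp : t ≤ p) :
    ζ ^ (p * k + t) ≠ ζ := by
  intro h
  have hpow : ζ ^ (t - 1) * ζ = 1 * ζ := by
    rw [← pow_succ, Nat.sub_add_cancel (by omega), one_mul]
    calc ζ ^ t = ζ ^ (p * k + t) := by rw [pow_add, pow_mul, hζ.pow_eq_one, one_pow, one_mul]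
      _ = ζ := h
  exact hζ.pow_ne_one_of_pos_of_lt (by omega) (by omega)
    (mul_right_cancel₀ (hζ.ne_zero (by omega)) hpow)

theorem Finsupp.multiset_prod_map_toMultiset {σ M : Type*} [CommMonoid M] (a : σ → M)
    (d : σ →₀ ℕ) : (d.toMultiset.map a).prod = d.prod fun i k => a i ^ k := by
  rw [toMultiset_map, prod_toMultiset,
    prod_mapDomain_index (fun _ => pow_zero _) (fun _ _ _ => pow_add _ _ _)]

namespace MvPowerSeries

variable {σ R : Type*} [CommRing R] {a b : σ → MvPowerSeries σ R} {c : R}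

theorem coeff_eq_of_lt_order_sub {f g : MvPowerSeries σ R} {e : σ →₀ ℕ}
    (h : (e.degree : ℕ∞) < (f - g).order) : coeff e f = coeff e g := by
  rw [← sub_eq_zero, ← map_sub]
  exact coeff_of_lt_order h

theorem constantCoeff_eq_of_one_le_order_sub {f g : MvPowerSeries σ R}
    (h : 1 ≤ (f - g).order) : constantCoeff f = constantCoeff g := by
  rw [← sub_eq_zero, ← map_sub]
  exact one_le_order_iff_constCoeff_eq_zero.mp h

theorem coeff_X_of_degree_ne_one {e : σ →₀ ℕ} (he : e.degree ≠ 1) (j : σ) :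
    coeff e (X j : MvPowerSeries σ R) = 0 := by
  classical
  rw [coeff_X, if_neg]
  rintro rfl
  exact he (degree_single j 1)

theorem le_order_smul_homogeneousComponent (c : R) (k : ℕ) (f : MvPowerSeries σ R) :
    (k : ℕ∞) ≤ (c • homogeneousComponent k f).order :=
  (nat_le_order fun d hd => by rw [coeff_homogeneousComponent, if_neg hd.ne]).trans le_order_smul

theorem le_order_multiset_prod_map (ha : ∀ i, constantCoeff (a i) = 0) (m : Multiset σ) :
    (Multiset.card m : ℕ∞) ≤ (m.map a).prod.order := by
  induction m using Multiset.induction_on with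
  | empty => simp
  | cons j m ih =>
    rw [Multiset.map_cons, Multiset.prod_cons, Multiset.card_cons, Nat.cast_add, Nat.cast_one,
      add_comm]
    exact (add_le_add (one_le_order_iff_constCoeff_eq_zero.mpr (ha j)) ih).trans le_order_mul

/-- The `+ 1` on the right avoids a truncated `card m - 1` when `m = 0`. -/
theorem le_order_multiset_prod_map_sub {s : ℕ} (ha : ∀ i, constantCoeff (a i) = 0)
    (hb : ∀ i, constantCoeff (b i) = 0) (hab : ∀ i, (s : ℕ∞) ≤ (a i - b i).order)
    (m : Multiset σ) :
    (s + Multiset.card m : ℕ∞) ≤ ((m.map a).prod - (m.map b).prod).order + 1 := by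
  induction m using Multiset.induction_on with
  | empty => simp
  | cons j m ih =>
    set P := (m.map a).prod
    set Q := (m.map b).prod
    have hfirst : (s + Multiset.card m : ℕ∞) ≤ ((a j - b j) * P).order :=
      (add_le_add (hab j) (le_order_multiset_prod_map ha m)).trans le_order_mul
    have hsecond : (s + Multiset.card m : ℕ∞) ≤ (b j * (P - Q)).order :=
      ((ih.trans_eq (add_comm _ _)).trans
        (add_le_add_left (one_le_order_iff_constCoeff_eq_zero.mpr (hb j)) _)).trans le_order_mul
    have hsplit : a j * P - b j * Q = (a j - b j) * P + b j * (P - Q) := by ring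
    simp only [Multiset.map_cons, Multiset.prod_cons, Multiset.card_cons]
    rw [hsplit, Nat.cast_add, Nat.cast_one, ← add_assoc]
    gcongr
    exact (le_min hfirst hsecond).trans min_order_le_add

theorem coeff_prod_pow_eq_zero_of_degree_lt (ha : ∀ i, constantCoeff (a i) = 0)
    {d e : σ →₀ ℕ} (he : e.degree < d.degree) :
    coeff e (d.prod fun i k => a i ^ k) = 0 := by
  have h := le_order_multiset_prod_map ha d.toMultiset
  rw [multiset_prod_map_toMultiset, card_toMultiset] at h
  exact coeff_of_lt_order ((Nat.cast_lt.mpr he).trans_le h)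

theorem coeff_prod_pow_eq_of_le_order_sub {s : ℕ} (ha : ∀ i, constantCoeff (a i) = 0)
    (hb : ∀ i, constantCoeff (b i) = 0) (hab : ∀ i, (s : ℕ∞) ≤ (a i - b i).order)
    {d e : σ →₀ ℕ} (he : e.degree + 1 < s + d.degree) :
    coeff e (d.prod fun i k => a i ^ k) = coeff e (d.prod fun i k => b i ^ k) := by
  have h := le_order_multiset_prod_map_sub ha hb hab d.toMultiset
  rw [multiset_prod_map_toMultiset, multiset_prod_map_toMultiset, card_toMultiset] at h
  refine coeff_eq_of_lt_order_sub ?_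
  have h' : ((e.degree + 1 : ℕ) : ℕ∞) < _ := (Nat.cast_lt.mpr he).trans_le h
  push_cast at h'
  exact (ENat.add_lt_add_iff_right ENat.one_ne_top).mp h'

theorem le_order_subst_sub_subst [Finite σ] {k : ℕ} (ha : ∀ i, constantCoeff (a i) = 0)
    (hb : ∀ i, constantCoeff (b i) = 0) (hab : ∀ i, (k : ℕ∞) ≤ (a i - b i).order)
    {f g : MvPowerSeries σ R} (hfg : (k : ℕ∞) ≤ (f - g).order) :
    (k : ℕ∞) ≤ (subst a f - subst b g).order := by
  refine nat_le_order fun e he => ?_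
  rw [map_sub, sub_eq_zero, coeff_subst (hasSubst_of_constantCoeff_zero ha),
    coeff_subst (hasSubst_of_constantCoeff_zero hb)]
  refine finsum_congr fun d => ?_
  rcases lt_or_ge e.degree d.degree with hed | hde
  · rw [coeff_prod_pow_eq_zero_of_degree_lt ha hed, coeff_prod_pow_eq_zero_of_degree_lt hb hed,
      smul_zero, smul_zero]
  rw [coeff_eq_of_lt_order_sub (Nat.cast_lt.mpr (hde.trans_lt he) |>.trans_le hfg)]
  rcases eq_or_ne d 0 with rfl | hd
  · simp
  · have : 0 < d.degree := Nat.pos_of_ne_zero ((degree_eq_zero_iff d).not.mpr hd)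
    rw [coeff_prod_pow_eq_of_le_order_sub ha hb hab (by omega)]

theorem coeff_subst_eq_coeff_subst_add_sum [Fintype σ] (ha : ∀ i, constantCoeff (a i) = 0)
    (hb : ∀ i, constantCoeff (b i) = 0) {r : ℕ} (hab : ∀ i, (r : ℕ∞) ≤ (a i - b i).order)
    (f : MvPowerSeries σ R) {e : σ →₀ ℕ} (he : e.degree = r) :
    coeff e (subst a f) =
      coeff e (subst b f) + ∑ j, coeff (single j 1) f * coeff e (a j - b j) := by
  classical
  have hA := hasSubst_of_constantCoeff_zero ha
  have hB := hasSubst_of_constantCoeff_zero hb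
  rw [← sub_eq_iff_eq_add', coeff_subst hA, coeff_subst hB,
    ← finsum_sub_distrib (coeff_subst_finite hA f e) (coeff_subst_finite hB f e)]
  have hsupp : (Function.support fun d => coeff d f • coeff e (d.prod fun i k => a i ^ k) -
      coeff d f • coeff e (d.prod fun i k => b i ^ k)) ⊆
      ↑(Finset.univ.image fun j : σ => single j 1) := by
    intro d hd
    rw [Finset.coe_image, Finset.coe_univ, Set.image_univ, range_single_one]
    by_contra hd1
    apply hd
    rcases eq_or_ne d 0 with rfl | hd0
    · simp
    · have : d.degree ≠ 0 := (degree_eq_zero_iff d).not.mpr hd0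
      have : d.degree ≠ 1 := hd1
      dsimp only
      rw [coeff_prod_pow_eq_of_le_order_sub (d := d) (e := e) ha hb hab (by omega), sub_self]
  rw [finsum_eq_sum_of_support_subset _ hsupp,
    Finset.sum_image fun _ _ _ _ h => single_left_injective one_ne_zero h]
  refine Finset.sum_congr rfl fun j _ => ?_
  simp [Finsupp.prod_single_index, smul_eq_mul, mul_sub]

def HasLinearPart (a : σ → MvPowerSeries σ R) (c : R) : Prop :=
  ∀ i, 2 ≤ (a i - c • X i).order

theorem HasLinearPart.constantCoeff_eq_zero (h : HasLinearPart a c) (i : σ) :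
    constantCoeff (a i) = 0 := by
  simpa using constantCoeff_eq_of_one_le_order_sub ((by norm_num : (1 : ℕ∞) ≤ 2).trans (h i))

theorem HasLinearPart.of_le_order_sub (ha : HasLinearPart a c)
    (hba : ∀ i, 2 ≤ (b i - a i).order) : HasLinearPart b c := fun i => by
  have hsplit : b i - c • X i = (b i - a i) + (a i - c • X i) := by ring
  rw [hsplit]
  exact (le_min (hba i) (ha i)).trans min_order_le_add

theorem HasLinearPart.sum_coeff_single_mul [Fintype σ] (h : HasLinearPart a c) (i : σ)
    (v : σ → R) : ∑ j, coeff (single j 1) (a i) * v j = c * v i := by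
  classical
  have hcoeff : ∀ j, coeff (single j 1) (a i) = coeff (single j 1) (c • X i) := fun j =>
    coeff_eq_of_lt_order_sub ((by simp : (((single j 1).degree : ℕ) : ℕ∞) < 2).trans_le (h i))
  simp [hcoeff, coeff_X, single_left_inj one_ne_zero]

theorem HasLinearPart.coeff_subst_of_le_order [Finite σ] (h : HasLinearPart a c)
    {f : MvPowerSeries σ R} {r : ℕ} (hf : (r : ℕ∞) ≤ f.order) {e : σ →₀ ℕ}
    (he : e.degree = r) : coeff e (subst a f) = c ^ r * coeff e f := by
  set cX : σ → MvPowerSeries σ R := (fun _ : σ => c) • (X : σ → MvPowerSeries σ R)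
  have hcX : ∀ i, constantCoeff (cX i) = 0 := by simp [cX]
  calc coeff e (subst a f) = coeff e (subst cX f) := by
        rw [coeff_subst (hasSubst_of_constantCoeff_zero h.constantCoeff_eq_zero),
          coeff_subst (HasSubst.smul_X _)]
        refine finsum_congr fun d => ?_
        by_cases hd : coeff d f = 0
        · simp [hd]
        have : r ≤ d.degree := by exact_mod_cast hf.trans (order_le hd)
        rw [coeff_prod_pow_eq_of_le_order_sub (s := 2) h.constantCoeff_eq_zero hcX h (by omega)]
    _ = c ^ r * coeff e f := by
        rw [← rescale_eq_subst, coeff_rescale, Finsupp.prod, Finset.prod_pow_eq_pow_sum,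
          ← degree_apply, he]

theorem succ_le_order_sub_X_of_subst_comm [Fintype σ] [IsDomain R]
    {ψ Ψ : σ → MvPowerSeries σ R} (hψ : HasLinearPart ψ c)
    (hcomm : ∀ i, subst ψ (Ψ i) = subst Ψ (ψ i)) {r : ℕ} (hr : 2 ≤ r) (hc : c ^ r ≠ c)
    (hΨ : ∀ i, (r : ℕ∞) ≤ (Ψ i - X i).order) (i : σ) :
    ((r + 1 : ℕ) : ℕ∞) ≤ (Ψ i - X i).order := by
  have hΨ0 : ∀ j, constantCoeff (Ψ j) = 0 := fun j => by
    simpa using constantCoeff_eq_of_one_le_order_sub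
      ((by norm_cast; omega : (1 : ℕ∞) ≤ r).trans (hΨ j))
  have hψ' := hasSubst_of_constantCoeff_zero hψ.constantCoeff_eq_zero
  refine nat_le_order fun e he => ?_
  rcases Nat.lt_succ_iff_lt_or_eq.mp he with he | he
  · exact coeff_of_lt_order ((Nat.cast_lt.mpr he).trans_le (hΨ i))
  have hXe : ∀ j, coeff e (X j : MvPowerSeries σ R) = 0 := coeff_X_of_degree_ne_one (by omega)
  have hleft : coeff e (subst ψ (Ψ i)) = coeff e (ψ i) + c ^ r * coeff e (Ψ i) := by
    have hsplit : Ψ i = X i + (Ψ i - X i) := by ring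
    rw [hsplit, subst_add hψ', subst_X hψ', map_add, hψ.coeff_subst_of_le_order (hΨ i) he,
      ← hsplit, map_sub, hXe, sub_zero]
  have hright : coeff e (subst Ψ (ψ i)) = coeff e (ψ i) + c * coeff e (Ψ i) := by
    rw [coeff_subst_eq_coeff_subst_add_sum hΨ0 constantCoeff_X hΨ (ψ i) he, subst_self, id,
      hψ.sum_coeff_single_mul, map_sub, hXe, sub_zero]
  have hzero : (c ^ r - c) * coeff e (Ψ i) = 0 := by
    linear_combination hleft.symm.trans ((congrArg (coeff e) (hcomm i)).trans hright)
  rw [map_sub, hXe, sub_zero]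
  exact (mul_eq_zero.mp hzero).resolve_left (sub_ne_zero.mpr hc)

end MvPowerSeries

theorem homC_apply (k : ℕ) (φ : Sys n K) (i : Fin n) :
    homC k φ i = homogeneousComponent k (φ i) := by
  ext e
  rw [coeff_homogeneousComponent]
  rfl

theorem hasLinearPart_of_homC {φ : Sys n K} {c : K} (h0 : homC 0 φ = 0)
    (h1 : homC 1 φ = c • idSys) : HasLinearPart φ c := fun i => by
  refine nat_le_order fun d hd => ?_
  rw [map_sub, sub_eq_zero]
  rcases Nat.lt_succ_iff_lt_or_eq.mp hd with hd | hd
  · have hd0 : degree d = 0 := by omega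
    have h0d := congrArg (coeff d) (congrFun h0 i)
    rw [homC_apply, coeff_homogeneousComponent, if_pos hd0] at h0d
    rw [h0d, (degree_eq_zero_iff d).mp hd0]
    simp
  · have h1d := congrArg (coeff d) (congrFun h1 i)
    rwa [homC_apply, coeff_homogeneousComponent, if_pos hd] at h1d

theorem homC_eq_zero_of_le_order_sub_X {Ψ : Sys n K} {r : ℕ} (hr : 2 ≤ r)
    (hΨ : ∀ i, ((r + 1 : ℕ) : ℕ∞) ≤ (Ψ i - X i).order) : homC r Ψ = 0 := by
  ext i e
  rw [homC_apply, coeff_homogeneousComponent, Pi.zero_apply, map_zero]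
  split_ifs with he
  · rw [coeff_eq_of_lt_order_sub ((Nat.cast_lt.mpr (he ▸ r.lt_succ_self)).trans_le (hΨ i)),
      coeff_X_of_degree_ne_one (by omega)]
  · rfl

theorem le_order_sub_X_of_truncLE_eq_idSys {m : ℕ} {φ : Sys n K} (h : truncLE m φ = idSys)
    (i : Fin n) : ((m + 1 : ℕ) : ℕ∞) ≤ (φ i - X i).order := by
  refine nat_le_order fun d hd => ?_
  have hd' := congrArg (coeff d) (congrFun h i)
  change (if degree d ≤ m then coeff d (φ i) else 0) = coeff d (X i) at hd'
  rw [if_pos (by omega)] at hd'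
  rw [map_sub, hd', sub_self]

theorem comp_apply_eq_subst (φ : Sys n K) {ψ : Sys n K} (hψ : ∀ j, constantCoeff (ψ j) = 0)
    (i : Fin n) : comp φ ψ i = subst ψ (φ i) := by
  ext e
  -- `comp` truncates `φ i` depending on `e`, so only its `e`-th coefficient is a substitution.
  rw [coeff_apply (comp φ ψ i)]
  set N : Fin n →₀ ℕ := equivFunOnFinite.symm fun _ => degree e + 1
  have htrunc : ((degree e + 1 : ℕ) : ℕ∞) ≤
      ((trunc K N (φ i) : MvPowerSeries (Fin n) K) - φ i).order := by
    refine nat_le_order fun d hd => ?_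
    have hdN : d < N := by
      refine lt_of_le_of_ne (fun j => (le_degree j d).trans (by simp [N]; omega)) fun hdN => ?_
      have hi : d i = degree e + 1 := by rw [hdN]; simp [N]
      have := le_degree i d
      omega
    rw [map_sub, MvPolynomial.coeff_coe, coeff_trunc, if_pos hdN, sub_self]
  have hsubst := le_order_subst_sub_subst hψ hψ (fun _ => by simp) htrunc
  refine Eq.trans ?_ (coeff_eq_of_lt_order_sub ((Nat.cast_lt.mpr e.degree.lt_succ_self).trans_le
    hsubst))
  have hC : algebraMap K (MvPowerSeries (Fin n) K) = C := RingHom.ext fun r => by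
    rw [MvPowerSeries.algebraMap_apply, Algebra.algebraMap_self, RingHom.id_apply]
  rw [subst_coe, MvPolynomial.aeval_def, hC]
  rfl

theorem constantCoeff_iterComp {φ : Sys n K} (hφ0 : ∀ j, constantCoeff (φ j) = 0) (m : ℕ)
    (i : Fin n) : constantCoeff (iterComp φ m i) = 0 := by
  induction m generalizing i with
  | zero => exact constantCoeff_X i
  | succ m ih =>
    rw [iterComp, comp_apply_eq_subst _ hφ0]
    exact constantCoeff_subst_eq_zero (hasSubst_of_constantCoeff_zero hφ0) hφ0 (ih i)

theorem iterComp_succ_apply {φ : Sys n K} (hφ0 : ∀ j, constantCoeff (φ j) = 0) (m : ℕ)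
    (i : Fin n) : iterComp φ (m + 1) i = subst φ (iterComp φ m i) :=
  comp_apply_eq_subst _ hφ0 i

theorem iterComp_succ_apply' {φ : Sys n K} (hφ0 : ∀ j, constantCoeff (φ j) = 0) (m : ℕ)
    (i : Fin n) : iterComp φ (m + 1) i = subst (iterComp φ m) (φ i) := by
  induction m generalizing i with
  | zero =>
    rw [iterComp_succ_apply hφ0]
    change subst φ (X i) = subst X (φ i)
    rw [subst_X (hasSubst_of_constantCoeff_zero hφ0), subst_self, id]
  | succ m ih =>
    rw [iterComp_succ_apply hφ0, ih, subst_comp_subst_apply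
      (hasSubst_of_constantCoeff_zero (constantCoeff_iterComp hφ0 m))
      (hasSubst_of_constantCoeff_zero hφ0)]
    simp only [← iterComp_succ_apply hφ0]

theorem MvPowerSeries.HasLinearPart.iterComp {φ : Sys n K} {c : K} (hφ : HasLinearPart φ c)
    (m : ℕ) : HasLinearPart (iterComp φ m) (c ^ m) := by
  have hφ0 := hφ.constantCoeff_eq_zero
  have hφ' := hasSubst_of_constantCoeff_zero hφ0
  induction m with
  | zero =>
    intro i
    change 2 ≤ ((X i : MvPowerSeries (Fin n) K) - c ^ 0 • X i).order
    simp
  | succ m ih =>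
    intro i
    have hsplit : _root_.iterComp φ (m + 1) i - c ^ (m + 1) • (X i : MvPowerSeries (Fin n) K) =
        (subst φ (_root_.iterComp φ m i) - subst φ (c ^ m • (X i : MvPowerSeries (Fin n) K))) +
          c ^ m • (φ i - c • X i) := by
      rw [subst_smul hφ', subst_X hφ', iterComp_succ_apply hφ0, pow_succ, mul_smul]
      module
    rw [hsplit]
    exact (le_min (le_order_subst_sub_subst (k := 2) hφ0 hφ0 (fun _ => by simp) (ih i))
      ((hφ i).trans le_order_smul)).trans min_order_le_add

theorem le_order_iterComp_sub_iterComp {φ ψ : Sys n K} (hφ0 : ∀ j, constantCoeff (φ j) = 0)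
    (hψ0 : ∀ j, constantCoeff (ψ j) = 0) {k : ℕ} (hψφ : ∀ i, (k : ℕ∞) ≤ (ψ i - φ i).order)
    (m : ℕ) (i : Fin n) : (k : ℕ∞) ≤ (iterComp ψ m i - iterComp φ m i).order := by
  induction m generalizing i with
  | zero =>
    change (k : ℕ∞) ≤ ((X i : MvPowerSeries (Fin n) K) - X i).order
    simp
  | succ m ih =>
    rw [iterComp_succ_apply hψ0, iterComp_succ_apply hφ0]
    exact le_order_subst_sub_subst hψ0 hφ0 hψφ (ih i)

theorem coeff_iterComp_eq_add_of_le_order_sub {φ ψ : Sys n K} {c : K} (hφ : HasLinearPart φ c)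
    (hψ : HasLinearPart ψ c) {N : ℕ} (hcN : c ^ N = 1)
    (hψφ : ∀ i, ((N + 1 : ℕ) : ℕ∞) ≤ (ψ i - φ i).order) {e : Fin n →₀ ℕ}
    (he : degree e = N + 1) (m : ℕ) (i : Fin n) :
    coeff e (iterComp ψ m i) =
      coeff e (iterComp φ m i) + m * c ^ (m - 1) * coeff e (ψ i - φ i) := by
  have hφ0 := hφ.constantCoeff_eq_zero
  have hψ0 := hψ.constantCoeff_eq_zero
  induction m with
  | zero => simp [iterComp]
  | succ m ih =>
    have hsplit : iterComp φ m i + (iterComp ψ m i - iterComp φ m i) = iterComp ψ m i := by ring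
    calc coeff e (iterComp ψ (m + 1) i)
        = coeff e (subst φ (iterComp ψ m i)) + c ^ m * coeff e (ψ i - φ i) := by
          rw [iterComp_succ_apply hψ0, coeff_subst_eq_coeff_subst_add_sum hψ0 hφ0 hψφ _ he,
            (hψ.iterComp m).sum_coeff_single_mul]
      _ = coeff e (iterComp φ (m + 1) i) +
            c ^ (N + 1) * (coeff e (iterComp ψ m i) - coeff e (iterComp φ m i)) +
            c ^ m * coeff e (ψ i - φ i) := by
          rw [iterComp_succ_apply hφ0, ← map_sub,
            ← hφ.coeff_subst_of_le_order (le_order_iterComp_sub_iterComp hφ0 hψ0 hψφ m i) he,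
            ← map_add, ← subst_add (hasSubst_of_constantCoeff_zero hφ0), hsplit]
      _ = coeff e (iterComp φ (m + 1) i) +
            ↑(m + 1) * c ^ (m + 1 - 1) * coeff e (ψ i - φ i) := by
          rw [ih, pow_succ, hcN, one_mul]
          rcases m with _ | m
          · simp
          · push_cast
            ring

theorem le_order_iterComp_sub_X_of_correction {φ ψ : Sys n K} {c : K} {p N : ℕ}
    (hφ : HasLinearPart φ c) (hψ : HasLinearPart ψ c) (hp : (p : K) ≠ 0) (hcp : c ^ p = 1)
    (hN : N ≠ 0) (hcN : c ^ N = 1)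
    (hper : ∀ i, ((N + 1 : ℕ) : ℕ∞) ≤ (iterComp φ p i - X i).order)
    (hu : ∀ i, ψ i - φ i = (-(c / p)) • homogeneousComponent (N + 1) (iterComp φ p i))
    (i : Fin n) : ((N + 2 : ℕ) : ℕ∞) ≤ (iterComp ψ p i - X i).order := by
  have hψφ : ∀ i, ((N + 1 : ℕ) : ℕ∞) ≤ (ψ i - φ i).order := fun i =>
    (hu i) ▸ le_order_smul_homogeneousComponent _ _ _
  refine nat_le_order fun e he => ?_
  rcases Nat.lt_succ_iff_lt_or_eq.mp he with he | he
  · have hsplit : iterComp ψ p i - X i =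
        (iterComp ψ p i - iterComp φ p i) + (iterComp φ p i - X i) := by ring
    rw [hsplit]
    exact coeff_of_lt_order ((Nat.cast_lt.mpr he).trans_le ((le_min
      (le_order_iterComp_sub_iterComp hφ.constantCoeff_eq_zero hψ.constantCoeff_eq_zero hψφ p i)
      (hper i)).trans min_order_le_add))
  have hp0 : p ≠ 0 := by rintro rfl; exact hp Nat.cast_zero
  have hcp' : c ^ (p - 1) * c = 1 := by
    rw [← pow_succ, Nat.sub_add_cancel (Nat.one_le_iff_ne_zero.mpr hp0), hcp]
  rw [map_sub, coeff_iterComp_eq_add_of_le_order_sub hφ hψ hcN hψφ he, hu i, coeff_smul,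
    coeff_homogeneousComponent, if_pos he, coeff_X_of_degree_ne_one (by omega)]
  field_simp
  linear_combination (-(coeff e (iterComp φ p i))) * hcp'

theorem next_components_vanish_general
    (n : ℕ) (K : Type) [Field K] (p : ℕ) (hchar : ¬ (ringChar K ∣ p))
    (ω : K) (hω : IsPrimitiveRoot ω p) (k : ℕ) (hk : 1 ≤ k)
    (φ : Sys n K) (hφ0 : homC 0 φ = 0) (hφ1 : homC 1 φ = ω • idSys)
    (hper : truncLE (p * k) (iterComp φ p) = idSys) :
    ∀ r : ℕ, p * k + 2 ≤ r → r ≤ p * k + p →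
      homC r
        (iterComp (φ + (-(ω / (p : K))) • homC (p * k + 1) (iterComp φ p)) p) = 0 := by
  intro r hr₁ hr₂
  set ψ := φ + (-(ω / (p : K))) • homC (p * k + 1) (iterComp φ p)
  have hN : p * k ≠ 0 := Nat.mul_ne_zero (by omega) (by omega)
  have hφ := hasLinearPart_of_homC hφ0 hφ1
  have hu : ∀ i, ψ i - φ i = (-(ω / p)) • homogeneousComponent (p * k + 1) (iterComp φ p i) :=
    fun i => by simp [ψ, homC_apply]
  have hψ : HasLinearPart ψ ω := hφ.of_le_order_sub fun i =>
    (hu i) ▸ (by norm_cast; omega : (2 : ℕ∞) ≤ (p * k + 1 : ℕ)).trans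
      (le_order_smul_homogeneousComponent _ _ _)
  have hcomm : ∀ i, subst ψ (iterComp ψ p i) = subst (iterComp ψ p) (ψ i) := fun i => by
    rw [← iterComp_succ_apply hψ.constantCoeff_eq_zero,
      iterComp_succ_apply' hψ.constantCoeff_eq_zero]
  have hbelow : ∀ s, p * k + 2 ≤ s → s ≤ r + 1 →
      ∀ i, (s : ℕ∞) ≤ (iterComp ψ p i - X i).order := by
    intro s hs
    induction s, hs using Nat.le_induction with
    | base =>
      exact fun _ => le_order_iterComp_sub_X_of_correction hφ hψ
        (fun h => hchar ((ringChar.spec K p).mp h)) hω.pow_eq_one hN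
        (by rw [pow_mul, hω.pow_eq_one, one_pow]) (le_order_sub_X_of_truncLE_eq_idSys hper) hu
    | succ s hs ih =>
      refine fun hsr => succ_le_order_sub_X_of_subst_comm hψ hcomm (by omega) ?_ (ih (by omega))
      have hs' : p * k + (s - p * k) = s := by omega
      simpa [hs'] using hω.pow_mul_add_ne_self k (t := s - p * k) (by omega) (by omega)
  exact homC_eq_zero_of_le_order_sub_X (by omega) (hbelow (r + 1) (by omega) le_rfl)

/-- Let `p ≥ 2` be not divisible by `char K`, `ω` a primitive `p`-th root of
unity and `k ≥ 1`.  If `φ = ω·id + Σ_{i=2}^{pk} φ_i` is `p`-periodic modulo degree `pk` and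
`ψ = φ + u` with `u = -(ω/p)·(φ^p)_{pk+1}`, then `(ψ^p)_r = 0` for `pk+2 ≤ r ≤ pk+p`. -/
theorem next_components_vanish
    (n : ℕ) (K : Type) [Field K] (p : ℕ) (hp : 2 ≤ p) (hchar : ¬ (ringChar K ∣ p))
    (ω : K) (hω : IsPrimitiveRoot ω p) (k : ℕ) (hk : 1 ≤ k)
    (φ : Sys n K) (hφ0 : homC 0 φ = 0) (hφ1 : homC 1 φ = ω • idSys)
    (hhigh : ∀ j : ℕ, p * k < j → homC j φ = 0)
    (hper : truncLE (p * k) (iterComp φ p) = idSys) :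
    ∀ r : ℕ, p * k + 2 ≤ r → r ≤ p * k + p →
      homC r
        (iterComp (φ + (-(ω / (p : K))) • homC (p * k + 1) (iterComp φ p)) p) = 0 :=
  next_components_vanish_general n K p hchar ω hω k hk φ hφ0 hφ1 hper
end
end

section
/- Let K be a field, let φ ∈ G_∞(n,K), and let ψ ∈ G_∞(n,K) be its compositional inverse (φ∘ψ = ψ∘φ = id). Let m ≥ 1 and suppose φ_j = 0 for every degree j ≥ 0 with j ≢ 1 (mod m), i.e. φ = Σ_{k=0}^∞ φ_{mk+1}. Then the inverse has the same form: ψ_j = 0 for every j ≥ 0 with j ≢ 1 (mod m). -/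
noncomputable section

open MvPowerSeries

variable {n : ℕ} {K : Type} [Field K]

/-! Strong induction on the degree `j`. The degree-`j` part of `φ ∘ ψ = id` is
`J_φ ψ_j + (contributions of the nonlinear monomials of φ) = 0`. A monomial of `φ` of degree
`k ≥ 2` (so `k ≡ 1 (mod m)`) evaluated at `ψ` contributes in degree `j` only products
`ψ_{a₁} ⋯ ψ_{a_k}` with every `aᵣ < j`, hence `aᵣ ≡ 1` by induction and `j = ∑ aᵣ ≡ k ≡ 1`.
So for `j ≢ 1` only `J_φ ψ_j = 0` survives, and `J_φ` is invertible. -/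

theorem Finsupp.sum_id_eq_degree {σ : Type*} (d : σ →₀ ℕ) : (d.sum fun _ k => k) = d.degree :=
  rfl

theorem Finsupp.exists_eq_single_of_degree_eq_one {σ : Type*} {d : σ →₀ ℕ} (hd : d.degree = 1) :
    ∃ l, d = Finsupp.single l 1 := by
  classical
  obtain ⟨l, hl⟩ := Multiset.card_eq_one.mp (by rwa [Finsupp.card_toMultiset])
  exact ⟨l, by simpa using Finsupp.toMultiset_eq_iff.mp hl⟩

namespace MvPowerSeries

variable {σ R : Type*} [CommSemiring R]

-- The cutoff moves with the weight `w` so that the property is preserved by products.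
def SupportModBelow (m w N : ℕ) (g : MvPowerSeries σ R) : Prop :=
  ∀ d, coeff d g ≠ 0 → w ≤ d.degree ∧ (d.degree < w + N → d.degree ≡ w [MOD m])

namespace SupportModBelow

variable {m N : ℕ}

theorem one : SupportModBelow (R := R) (σ := σ) m 0 N 1 := by
  classical
  intro d hd
  rw [coeff_one] at hd
  obtain rfl : d = 0 := by by_contra h; exact hd (if_neg h)
  simp [Nat.ModEq.refl]

theorem mul {w₁ w₂ : ℕ} {g₁ g₂ : MvPowerSeries σ R} (h₁ : SupportModBelow m w₁ N g₁)
    (h₂ : SupportModBelow m w₂ N g₂) : SupportModBelow m (w₁ + w₂) N (g₁ * g₂) := by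
  classical
  intro d hd
  rw [coeff_mul] at hd
  obtain ⟨⟨d₁, d₂⟩, hmem, hne⟩ := Finset.exists_ne_zero_of_sum_ne_zero hd
  rw [Finset.HasAntidiagonal.mem_antidiagonal] at hmem
  dsimp only at hmem hne
  obtain ⟨hw₁, hmod₁⟩ := h₁ d₁ (left_ne_zero_of_mul hne)
  obtain ⟨hw₂, hmod₂⟩ := h₂ d₂ (right_ne_zero_of_mul hne)
  rw [← hmem, map_add]
  exact ⟨by omega, fun hlt => (hmod₁ (by omega)).add (hmod₂ (by omega))⟩

theorem pow {w : ℕ} {g : MvPowerSeries σ R} (hg : SupportModBelow m w N g) :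
    ∀ k, SupportModBelow m (k * w) N (g ^ k)
  | 0 => by simpa using one
  | k + 1 => by simpa [pow_succ, add_mul] using (hg.pow k).mul hg

theorem finset_prod {ι : Type*} (s : Finset ι) {w : ι → ℕ} {g : ι → MvPowerSeries σ R}
    (hg : ∀ i ∈ s, SupportModBelow m (w i) N (g i)) :
    SupportModBelow m (∑ i ∈ s, w i) N (∏ i ∈ s, g i) := by
  induction s using Finset.cons_induction with
  | empty => simpa using one
  | cons a s ha ih =>
    rw [Finset.prod_cons, Finset.sum_cons]
    exact (hg a (s.mem_cons_self a)).mul (ih fun i hi => hg i (Finset.mem_cons_of_mem hi))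

theorem finsuppProd {g : σ → MvPowerSeries σ R} (hg : ∀ l, SupportModBelow m 1 N (g l))
    (d : σ →₀ ℕ) : SupportModBelow m d.degree N (d.prod fun l k => g l ^ k) := by
  simpa [Finsupp.degree_apply, Finsupp.prod] using
    finset_prod d.support fun l _ => (hg l).pow (d l)

end SupportModBelow

theorem coeff_eval₂_trunc [DecidableEq σ] (ψ : σ → MvPowerSeries σ R) (b e : σ →₀ ℕ)
    (p : MvPowerSeries σ R) :
    coeff e (MvPolynomial.eval₂ C ψ (trunc R b p)) =
      ∑ d ∈ Finset.Iio b, coeff d p * coeff e (d.prod fun l k => ψ l ^ k) := by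
  simp [trunc, truncFinset_apply, MvPolynomial.eval₂_sum, MvPolynomial.eval₂_monomial,
    coeff_C_mul]

end MvPowerSeries

open scoped Matrix

theorem homC_eq_zero_iff {k : ℕ} {φ : Sys n K} :
    homC k φ = 0 ↔ ∀ i e, e.degree = k → coeff e (φ i) = 0 := by
  simp only [funext_iff, MvPowerSeries.ext_iff]
  refine forall_congr' fun i => forall_congr' fun e => ?_
  change (if (e.sum fun _ x => x) = k then coeff e (φ i) else 0) = 0 ↔ _
  rw [Finsupp.sum_id_eq_degree]
  split_ifs with he <;> simp [he]

theorem coeff_comp_s18 (φ ψ : Sys n K) (i : Fin n) (e : Fin n →₀ ℕ) :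
    coeff e (comp φ ψ i) = ∑ d ∈ Finset.Iio (Finsupp.equivFunOnFinite.symm fun _ => e.degree + 1),
      coeff d (φ i) * coeff e (d.prod fun l k => ψ l ^ k) := by
  rw [← coeff_eval₂_trunc, coeff_apply]
  rfl

theorem coeff_comp_eq_mulVec (φ ψ : Sys n K) {e : Fin n →₀ ℕ} (he : e ≠ 0)
    (hlin : ∀ i d, d.degree ≠ 1 → coeff d (φ i) * coeff e (d.prod fun l k => ψ l ^ k) = 0) :
    (fun i => coeff e (comp φ ψ i)) = jac φ *ᵥ fun l => coeff e (ψ l) := by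
  funext i
  have hsingle_lt (l : Fin n) :
      Finsupp.single l 1 < Finsupp.equivFunOnFinite.symm fun _ => e.degree + 1 := by
    have : 1 ≤ e.degree := Nat.one_le_iff_ne_zero.mpr ((Finsupp.degree_eq_zero_iff e).not.mpr he)
    refine Finsupp.lt_def.mpr ⟨fun a => ?_, l, by simp; omega⟩
    simp only [Finsupp.coe_equivFunOnFinite_symm, Finsupp.single_apply]
    split_ifs <;> omega
  rw [coeff_comp_s18, ← Finset.sum_subset (s₁ := Finset.univ.image (Finsupp.single · 1))]
  · rw [Finset.sum_image fun _ _ _ _ h => Finsupp.single_left_injective one_ne_zero h]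
    simp [Matrix.mulVec, dotProduct, jac]
  · simpa [Finset.subset_iff] using hsingle_lt
  · intro d _ hd
    refine hlin i d fun hd1 => hd ?_
    obtain ⟨l, rfl⟩ := Finsupp.exists_eq_single_of_degree_eq_one hd1
    exact Finset.mem_image_of_mem _ (Finset.mem_univ l)

section InverseSupport

variable {m j : ℕ} {φ ψ : Sys n K}

theorem supportModBelow_of_homC_eq_zero (hψ0 : homC 0 ψ = 0)
    (hψ : ∀ k < j, ¬ k ≡ 1 [MOD m] → homC k ψ = 0) (l : Fin n) :
    SupportModBelow m 1 (j - 1) (ψ l) := by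
  intro d hd
  have hd0 : d.degree ≠ 0 := fun h => hd (homC_eq_zero_iff.mp hψ0 l d h)
  refine ⟨Nat.one_le_iff_ne_zero.mpr hd0, fun hlt => ?_⟩
  by_contra hmod
  exact hd (homC_eq_zero_iff.mp (hψ _ (by omega) hmod) l d rfl)

theorem coeff_mul_coeff_prod_eq_zero (hφ0 : homC 0 φ = 0)
    (hφ : ∀ k, ¬ k ≡ 1 [MOD m] → homC k φ = 0) (hψ : ∀ l, SupportModBelow m 1 (j - 1) (ψ l))
    (hj : ¬ j ≡ 1 [MOD m]) {e d : Fin n →₀ ℕ} (he : e.degree = j) (hd : d.degree ≠ 1) (i : Fin n) :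
    coeff d (φ i) * coeff e (d.prod fun l k => ψ l ^ k) = 0 := by
  by_cases hk : d.degree ≡ 1 [MOD m]
  · obtain hd0 | hd2 : d.degree = 0 ∨ 2 ≤ d.degree := by omega
    · rw [homC_eq_zero_iff.mp hφ0 i d hd0, zero_mul]
    · suffices coeff e (d.prod fun l k => ψ l ^ k) = 0 by rw [this, mul_zero]
      by_contra hne
      obtain ⟨-, hmod⟩ := SupportModBelow.finsuppProd hψ d e hne
      exact hj (he ▸ (hmod (by omega)).trans hk)
  · rw [homC_eq_zero_iff.mp (hφ _ hk) i d rfl, zero_mul]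

theorem homC_eq_zero_of_comp_eq_idSys (hφ0 : homC 0 φ = 0) (hinv : IsUnit (jac φ).det)
    (hcomp : comp φ ψ = idSys) (hφ : ∀ k, ¬ k ≡ 1 [MOD m] → homC k φ = 0)
    (hψ0 : homC 0 ψ = 0) (hψ : ∀ k < j, ¬ k ≡ 1 [MOD m] → homC k ψ = 0)
    (hj : ¬ j ≡ 1 [MOD m]) : homC j ψ = 0 := by
  obtain rfl | hj0 := eq_or_ne j 0
  · exact hψ0
  refine homC_eq_zero_iff.mpr fun i e he => ?_
  have he0 : e ≠ 0 := by rw [Ne, ← Finsupp.degree_eq_zero_iff, he]; exact hj0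
  have hid : (fun i => coeff e (idSys (n := n) (K := K) i)) = 0 := by
    funext l
    rw [idSys, coeff_X, if_neg]
    · rfl
    · rintro rfl
      exact hj (by rw [← he, Finsupp.degree_single])
  have hlin := coeff_comp_eq_mulVec φ ψ he0 fun i d hd =>
    coeff_mul_coeff_prod_eq_zero hφ0 hφ (supportModBelow_of_homC_eq_zero hψ0 hψ) hj he hd i
  rw [hcomp, hid] at hlin
  exact congrFun (Matrix.eq_zero_of_mulVec_eq_zero hinv.ne_zero hlin.symm) i

end InverseSupport

theorem inverse_has_same_support_general
    (n : ℕ) (K : Type) [Field K] (m : ℕ)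
    (φ ψ : Sys n K)
    (hφ0 : homC 0 φ = 0) (hψ0 : homC 0 ψ = 0)
    (hinvφ : IsUnit (jac φ).det)
    (h1 : comp φ ψ = idSys)
    (h : ∀ j : ℕ, j % m ≠ 1 % m → homC j φ = 0) :
    ∀ j : ℕ, j % m ≠ 1 % m → homC j ψ = 0 := by
  intro j
  induction j using Nat.strong_induction_on with
  | _ j ih => exact homC_eq_zero_of_comp_eq_idSys hφ0 hinvφ h1 h hψ0 ih

/-- If `ψ` is the compositional inverse of `φ ∈ G_∞(n,K)` and all
homogeneous components of `φ` in degrees `j ≢ 1 (mod m)` vanish, then the same holds for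
`ψ`. -/
theorem inverse_has_same_support
    (n : ℕ) (K : Type) [Field K] (m : ℕ) (hm : 1 ≤ m)
    (φ ψ : Sys n K)
    (hφ0 : homC 0 φ = 0) (hψ0 : homC 0 ψ = 0)
    (hinvφ : IsUnit (jac φ).det) (hinvψ : IsUnit (jac ψ).det)
    (h1 : comp φ ψ = idSys) (h2 : comp ψ φ = idSys)
    (h : ∀ j : ℕ, j % m ≠ 1 % m → homC j φ = 0) :
    ∀ j : ℕ, j % m ≠ 1 % m → homC j ψ = 0 :=
  inverse_has_same_support_general n K m φ ψ hφ0 hψ0 hinvφ h1 h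
end
end
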